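/- For all t > 0, one has (1/2)(t − 1)² ≤ ψ(t) ≤ (1/2)(ψ'(t))², where ψ(t) = (1/2)(2t² + 1/t² − 5) + e^{1/t−1}. -/

import Mathlib

noncomputable def psi (t : ℝ) : ℝ :=
  (1/2) * (2*t^2 + 1/t^2 - 5) + Real.exp (1/t - 1)

noncomputable def psi' (t : ℝ) : ℝ := 2*t - 1/t^3 - (1/t^2) * Real.exp (1/t - 1)

/-!
Both bounds hold for any function `f` on an interval with `f'' ≥ m > 0` and `f a = f' a = 0`
(here `ψ'' ≥ 1` at `a = 1`). The differences `f - m/2 (x - a)²` and `f'²/(2m) - f` vanish at `a`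
and have derivatives `f' - m (x - a)` and `f' (f'' - m) / m`; these have the sign of `x - a`,
because `f' - m (x - a)` and `f'` are nondecreasing and vanish at `a`. So `a` minimises both.
-/

open Set

section StrongConvexity

variable {s : Set ℝ} {f f' f'' : ℝ → ℝ} {a x m : ℝ}

theorem exists_hasDerivAt_sub_eq_mul (hs : s.OrdConnected)
    (hf : ∀ y ∈ s, HasDerivAt f (f' y) y) (ha : a ∈ s) (hx : x ∈ s) (hxa : x ≠ a) :
    ∃ c ∈ s, 0 < (c - a) * (x - a) ∧ f x - f a = f' c * (x - a) := by
  have mvt : ∀ y ∈ s, ∀ z ∈ s, y < z → ∃ c ∈ Ioo y z, f z - f y = f' c * (z - y) := by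
    intro y hy z hz hyz
    have hsub := hs.out hy hz
    obtain ⟨c, hc, hslope⟩ := exists_hasDerivAt_eq_slope f f' hyz
      (HasDerivAt.continuousOn fun w hw => hf w (hsub hw))
      (fun w hw => hf w (hsub (Ioo_subset_Icc_self hw)))
    refine ⟨c, hc, ?_⟩
    rw [hslope, div_mul_cancel₀ _ (sub_ne_zero.2 hyz.ne')]
  rcases hxa.lt_or_gt with hlt | hgt
  · obtain ⟨c, hc, heq⟩ := mvt x hx a ha hlt
    exact ⟨c, hs.out hx ha (Ioo_subset_Icc_self hc),
      mul_pos_of_neg_of_neg (by linarith [hc.2]) (by linarith), by linarith⟩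
  · obtain ⟨c, hc, heq⟩ := mvt a ha x hx hgt
    exact ⟨c, hs.out ha hx (Ioo_subset_Icc_self hc),
      mul_pos (by linarith [hc.1]) (by linarith), heq⟩

theorem sub_mul_nonneg_of_deriv_nonneg (hs : s.OrdConnected)
    (hf : ∀ y ∈ s, HasDerivAt f (f' y) y) (hf' : ∀ y ∈ s, 0 ≤ f' y) (ha : a ∈ s)
    (hfa : f a = 0) (hx : x ∈ s) : 0 ≤ (x - a) * f x := by
  rcases eq_or_ne x a with rfl | hxa
  · simp
  obtain ⟨c, hc, -, heq⟩ := exists_hasDerivAt_sub_eq_mul hs hf ha hx hxa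
  rw [hfa, sub_zero] at heq
  rw [heq, mul_left_comm, ← sq]
  exact mul_nonneg (hf' c hc) (sq_nonneg _)

theorem apply_le_of_sub_mul_deriv_nonneg (hs : s.OrdConnected)
    (hf : ∀ y ∈ s, HasDerivAt f (f' y) y) (hf' : ∀ y ∈ s, 0 ≤ (y - a) * f' y) (ha : a ∈ s)
    (hx : x ∈ s) : f a ≤ f x := by
  rcases eq_or_ne x a with rfl | hxa
  · rfl
  obtain ⟨c, hc, hca, heq⟩ := exists_hasDerivAt_sub_eq_mul hs hf ha hx hxa
  nlinarith [mul_nonneg (hf' c hc) (sq_nonneg (x - a))]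

variable (hs : s.OrdConnected) (hf : ∀ y ∈ s, HasDerivAt f (f' y) y)
  (hf' : ∀ y ∈ s, HasDerivAt f' (f'' y) y) (hm : ∀ y ∈ s, m ≤ f'' y)
  (ha : a ∈ s) (hfa : f a = 0) (hf'a : f' a = 0) (hx : x ∈ s)
include hs hf hf' hm ha hfa hf'a hx

theorem half_mul_sq_le_of_le_deriv2 : m / 2 * (x - a) ^ 2 ≤ f x := by
  have hgap' : ∀ y ∈ s, 0 ≤ (y - a) * (f' y - m * (y - a)) := fun y hy =>
    sub_mul_nonneg_of_deriv_nonneg hs (f := fun z => f' z - m * (z - a))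
      (fun z hz => (hf' z hz).sub (((hasDerivAt_id z).sub_const a).const_mul m) |>.congr_deriv
        (by ring))
      (fun z hz => sub_nonneg.2 (hm z hz)) ha (by simp [hf'a]) hy
  have hgap := apply_le_of_sub_mul_deriv_nonneg (f := fun y => f y - m / 2 * (y - a) ^ 2) hs
    (fun y hy => (hf y hy).sub ((((hasDerivAt_id y).sub_const a).pow 2).const_mul (m / 2))
      |>.congr_deriv (by simp only [id]; ring)) hgap' ha hx
  simp only [sub_self, hfa] at hgap
  linarith

theorem le_sq_deriv_div_of_le_deriv2 (hm0 : 0 < m) : f x ≤ f' x ^ 2 / (2 * m) := by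
  have hsign : ∀ y ∈ s, 0 ≤ (y - a) * f' y := fun y hy =>
    sub_mul_nonneg_of_deriv_nonneg hs hf' (fun z hz => hm0.le.trans (hm z hz)) ha hf'a hy
  have hgap := apply_le_of_sub_mul_deriv_nonneg (f := fun y => f' y ^ 2 / (2 * m) - f y)
    (f' := fun y => f' y * (f'' y - m) / m) hs
    (fun y hy => (((hf' y hy).pow 2).div_const (2 * m)).sub (hf y hy) |>.congr_deriv
      (by field_simp; ring))
    (fun y hy => by
      rw [← mul_div_assoc, ← mul_assoc]
      exact div_nonneg (mul_nonneg (hsign y hy) (sub_nonneg.2 (hm y hy))) hm0.le)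
    ha hx
  norm_num [hf'a, hfa] at hgap
  linarith

end StrongConvexity

noncomputable def psi'' (t : ℝ) : ℝ := 2 + 3/t^4 + (2/t^3 + 1/t^4) * Real.exp (1/t - 1)

section Psi

variable {t : ℝ}

theorem hasDerivAt_one_div_sq (ht : t ≠ 0) :
    HasDerivAt (fun x : ℝ => 1 / x ^ 2) (-2 / t ^ 3) t := by
  refine (hasDerivAt_pow 2 t).fun_inv (pow_ne_zero 2 ht) |>.congr_deriv ?_
    |>.congr_of_eventuallyEq ?_
  · field_simp
    norm_num
    ring
  · simp [one_div]

theorem hasDerivAt_one_div_cube (ht : t ≠ 0) :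
    HasDerivAt (fun x : ℝ => 1 / x ^ 3) (-3 / t ^ 4) t := by
  refine (hasDerivAt_pow 3 t).fun_inv (pow_ne_zero 3 ht) |>.congr_deriv ?_
    |>.congr_of_eventuallyEq ?_
  · field_simp
    norm_num
    ring
  · simp [one_div]

theorem hasDerivAt_exp_one_div_sub_one (ht : t ≠ 0) :
    HasDerivAt (fun x : ℝ => Real.exp (1 / x - 1)) (-Real.exp (1 / t - 1) / t ^ 2) t := by
  refine ((hasDerivAt_inv ht).sub_const 1).exp.congr_deriv ?_ |>.congr_of_eventuallyEq ?_
  · simp only [one_div]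
    ring
  · simp [one_div]

theorem hasDerivAt_psi (ht : t ≠ 0) : HasDerivAt psi (psi' t) t := by
  refine ((((hasDerivAt_pow 2 t).const_mul 2).add (hasDerivAt_one_div_sq ht)).sub_const 5
    |>.const_mul (1 / 2) |>.add (hasDerivAt_exp_one_div_sub_one ht)).congr_deriv ?_
  norm_num [psi']
  field_simp
  ring

theorem hasDerivAt_psi' (ht : t ≠ 0) : HasDerivAt psi' (psi'' t) t := by
  refine (((hasDerivAt_id t).const_mul 2).sub (hasDerivAt_one_div_cube ht) |>.sub
    ((hasDerivAt_one_div_sq ht).mul (hasDerivAt_exp_one_div_sub_one ht))).congr_deriv ?_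
  simp only [psi'']
  field_simp
  ring

theorem one_le_psi'' (ht : 0 < t) : 1 ≤ psi'' t := by
  have : 0 ≤ 3/t^4 + (2/t^3 + 1/t^4) * Real.exp (1/t - 1) := by positivity
  unfold psi''
  linarith

end Psi

theorem stmt_10 : ∀ t : ℝ, 0 < t →
    (1/2) * (t - 1)^2 ≤ psi t ∧ psi t ≤ (1/2) * (psi' t)^2 := by
  intro t ht
  have hf : ∀ y ∈ Ioi (0 : ℝ), HasDerivAt psi (psi' y) y := fun y hy => hasDerivAt_psi hy.ne'
  have hf' : ∀ y ∈ Ioi (0 : ℝ), HasDerivAt psi' (psi'' y) y :=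
    fun y hy => hasDerivAt_psi' hy.ne'
  have hm : ∀ y ∈ Ioi (0 : ℝ), 1 ≤ psi'' y := fun y hy => one_le_psi'' hy
  have h1 : (1 : ℝ) ∈ Ioi 0 := mem_Ioi.2 one_pos
  have hpsi : psi 1 = 0 := by norm_num [psi]
  have hpsi' : psi' 1 = 0 := by norm_num [psi']
  refine ⟨half_mul_sq_le_of_le_deriv2 ordConnected_Ioi hf hf' hm h1 hpsi hpsi' ht, ?_⟩
  have := le_sq_deriv_div_of_le_deriv2 ordConnected_Ioi hf hf' hm h1 hpsi hpsi' ht one_pos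
  linarith
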